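/- arXiv:1811.06592 — 2 statements merged into one kernel-verified Lean document; each statement's English description precedes it below -/
import Mathlib

section
/- Let M(x) be the N×N lower-triangular matrix with entries M(x)_{m,n} = (μ_m/μ_n) L_{m−n}^{(−α−m−1)}(−x) for m ≥ n and 0 for m < n. Then for every real x, M(x) · L_μ^{(α)}(x) = I and L_μ^{(α)}(x) · M(x) = I; that is, M(x) = (L_μ^{(α)}(x))^{−1}. -/
open scoped BigOperators
open Matrix MeasureTheory

noncomputable section

/-- Pochhammer symbol `(a)_m = a(a+1)⋯(a+m-1)`. -/
def poch (a : ℝ) (m : ℕ) : ℝ := ∏ i ∈ Finset.range m, (a + i)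

/-- Generalized Laguerre polynomial `L_n^{(α)}(x)`. -/
def lagP (α : ℝ) (n : ℕ) (x : ℝ) : ℝ :=
  ∑ k ∈ Finset.range (n + 1),
    (-1 : ℝ) ^ k * poch (α + k + 1) (n - k) * x ^ k / ((n - k).factorial * k.factorial)

/-- The matrix `L_μ^{(α)}(x)`; the 0-based index pair `(i,j)` corresponds to the
1-based index pair `(i+1, j+1)` of the paper. -/
def LagMat (N : ℕ) (μ : Fin N → ℝ) (α : ℝ) (x : ℝ) : Matrix (Fin N) (Fin N) ℝ :=
  Matrix.of fun m n : Fin N =>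
    if (n : ℕ) ≤ (m : ℕ) then μ m / μ n * lagP (α + (n : ℕ) + 1) ((m : ℕ) - (n : ℕ)) x else 0

/-- The matrix `A_μ = S_μ A S_μ⁻¹`, written entrywise. -/
def AmuMat (N : ℕ) (μ : Fin N → ℝ) : Matrix (Fin N) (Fin N) ℝ :=
  Matrix.of fun i j : Fin N => if (i : ℕ) = (j : ℕ) + 1 then -(μ i / μ j) else 0

/-- `J = diag(1,…,N)`. -/
def Jmat (N : ℕ) : Matrix (Fin N) (Fin N) ℝ :=
  Matrix.diagonal fun i => ((i : ℕ) + 1 : ℝ)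

/-- `T^{(ν)}(x) = e^{-x} Σ_k δ_k x^{ν+k} E_{k,k}`. -/
def Tmat (N : ℕ) (δ : Fin N → ℝ) (ν : ℝ) (x : ℝ) : Matrix (Fin N) (Fin N) ℝ :=
  Matrix.diagonal fun k => Real.exp (-x) * δ k * x ^ (ν + (k : ℕ) + 1)

/-- The weight `W_μ^{(α,ν)}(x) = L_μ^{(α)}(x) T^{(ν)}(x) L_μ^{(α)}(x)^*`. -/
def Wmat (N : ℕ) (μ δ : Fin N → ℝ) (α ν : ℝ) (x : ℝ) : Matrix (Fin N) (Fin N) ℝ :=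
  LagMat N μ α x * Tmat N δ ν x * (LagMat N μ α x)ᵀ

/-- Entrywise evaluation of a matrix of polynomials. -/
def matPolyEval {N : ℕ} (P : Matrix (Fin N) (Fin N) (Polynomial ℝ)) (x : ℝ) :
    Matrix (Fin N) (Fin N) ℝ :=
  Matrix.of fun i j => (P i j).eval x

/-- Entrywise derivative of a matrix of polynomials. -/
def matPolyDeriv {N : ℕ} (P : Matrix (Fin N) (Fin N) (Polynomial ℝ)) :
    Matrix (Fin N) (Fin N) (Polynomial ℝ) :=
  Matrix.of fun i j => Polynomial.derivative (P i j)

/-- `P` is the monic (matrix valued) orthogonal polynomial of degree `n` w.r.t. the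
weight `W` on `(0,∞)`. -/
def MonicOrth (N : ℕ) (W : ℝ → Matrix (Fin N) (Fin N) ℝ) (n : ℕ)
    (P : Matrix (Fin N) (Fin N) (Polynomial ℝ)) : Prop :=
  (∀ i j, (P i j).degree ≤ n) ∧
  Matrix.of (fun i j => (P i j).coeff n) = (1 : Matrix (Fin N) (Fin N) ℝ) ∧
  ∀ k, k < n → ∀ i j, (∫ x in Set.Ioi (0 : ℝ), (matPolyEval P x * W x) i j * x ^ k) = 0

/-- Conditions (C1) and (C2) at level `ν`, relating `δ = δ^{(ν)}`, `δ' = δ^{(ν+1)}`,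
`c = c^{(ν)}` and `d = d^{(ν)}`. -/
def PearsonCond (N : ℕ) (μ δ δ' : Fin N → ℝ) (c d : ℝ) : Prop :=
  0 < c ∧ 0 < d ∧
  (∀ k : Fin N, δ' k = (((k : ℕ) + 1) * d + c) * δ k) ∧
  ∀ (k : Fin N) (h : (k : ℕ) + 1 < N),
    μ ⟨(k : ℕ) + 1, h⟩ ^ 2 / μ k ^ 2 =
      d * ((k : ℕ) + 1) * ((N : ℝ) - ((k : ℕ) + 1)) * δ ⟨(k : ℕ) + 1, h⟩ / δ' k

/-- `Φ^{(α,ν)}(x)` (with `c = c^{(ν)}`, `d = d^{(ν)}`). -/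
def PhiMat (N : ℕ) (μ : Fin N → ℝ) (α c d : ℝ) (x : ℝ) : Matrix (Fin N) (Fin N) ℝ :=
  ((LagMat N μ α 0)ᵀ)⁻¹ *
    (-(d * x ^ 2) • (AmuMat N μ)ᵀ + x • (d • Jmat N + c • (1 : Matrix (Fin N) (Fin N) ℝ))) *
    (LagMat N μ α 0)ᵀ

/-- `Ψ^{(α,ν)}(x)` (with `δ = δ^{(ν)}`, `δ' = δ^{(ν+1)}`, `c = c^{(ν)}`, `d = d^{(ν)}`). -/
def PsiMat (N : ℕ) (μ δ δ' : Fin N → ℝ) (α ν c d : ℝ) (x : ℝ) : Matrix (Fin N) (Fin N) ℝ :=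
  ((LagMat N μ α 0)ᵀ)⁻¹ *
    (x • (d • (Jmat N - (AmuMat N μ)ᵀ * (Jmat N + (ν + 1) • (1 : Matrix (Fin N) (Fin N) ℝ)) -
        ((N : ℝ) + 1) • (1 : Matrix (Fin N) (Fin N) ℝ)) - c • (1 : Matrix (Fin N) (Fin N) ℝ)) +
      (Jmat N + (ν + 1) • (1 : Matrix (Fin N) (Fin N) ℝ)) *
        (d • Jmat N + c • (1 : Matrix (Fin N) (Fin N) ℝ)) +
      (Matrix.diagonal δ)⁻¹ * AmuMat N μ * Matrix.diagonal δ') *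
    (LagMat N μ α 0)ᵀ

/-- `K_n^{(β,ν)}` (with `c = c^{(ν)}`, `d = d^{(ν)}`). -/
def Kmat (N : ℕ) (μ : Fin N → ℝ) (β ν c d : ℝ) (n : ℕ) : Matrix (Fin N) (Fin N) ℝ :=
  LagMat N μ β 0 *
    (d • (Jmat N - (Jmat N + (ν + n) • (1 : Matrix (Fin N) (Fin N) ℝ)) * AmuMat N μ -
      ((N : ℝ) + 1) • (1 : Matrix (Fin N) (Fin N) ℝ)) - c • (1 : Matrix (Fin N) (Fin N) ℝ)) *
    (LagMat N μ β 0)⁻¹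

/-- `(Q D^{(α,ν)})(x)` for a matrix valued polynomial `Q`. -/
def Dapply (N : ℕ) (μ : Fin N → ℝ) (α ν : ℝ)
    (Q : Matrix (Fin N) (Fin N) (Polynomial ℝ)) (x : ℝ) : Matrix (Fin N) (Fin N) ℝ :=
  x • matPolyEval (matPolyDeriv (matPolyDeriv Q)) x +
    matPolyEval (matPolyDeriv Q) x *
      ((-x) • (AmuMat N μ + 1)⁻¹ + (ν + 1) • (1 : Matrix (Fin N) (Fin N) ℝ) + Jmat N +
        (α • (1 : Matrix (Fin N) (Fin N) ℝ) + Jmat N) * AmuMat N μ) +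
    matPolyEval Q x * ((α - ν) • (AmuMat N μ + 1)⁻¹ - Jmat N)

/-!
Write `⟨a⟩_r = (a)_r / r!`, so that `L_n^{(α)}(x) = ∑_{k+r=n} (-x)^k/k! ⟨α+k+1⟩_r`. The
Chu–Vandermonde identity `⟨a+b⟩_q = ∑_{r+t=q} ⟨a⟩_r ⟨b⟩_t` together with the binomial theorem
gives the addition formula `∑_{i+j=s} L_i^{(β)}(x) L_j^{(γ)}(y) = L_s^{(β+γ+1)}(x+y)`. In the
`(m,n)` entry of `M(x) L_μ^{(α)}(x)` the scalings `μ` cancel and the Laguerre parameters add up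
to `n - m`, so the entry is `(μ_m/μ_n) L_{m-n}^{(n-m)}(0) = (μ_m/μ_n) ⟨1-(m-n)⟩_{m-n}`, which is
`0` unless `m = n`. A one-sided inverse of a square matrix is two-sided.
-/

open Finset Nat

theorem Ring.multichoose_add {R : Type*} [CommRing R] [BinomialRing R] (a b : R) (k : ℕ) :
    Ring.multichoose (a + b) k =
      ∑ p ∈ antidiagonal k, Ring.multichoose a p.1 * Ring.multichoose b p.2 := by
  have h := Ring.add_choose_eq k (Commute.all (-a) (-b))
  rw [← neg_add, Ring.choose_neg'] at h
  simp only [Ring.choose_neg', smul_mul_smul_comm, ← Int.negOnePow_add, ← Nat.cast_add] at h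
  rw [sum_congr rfl fun p hp ↦ by rw [mem_antidiagonal.mp hp], ← smul_sum] at h
  exact MulAction.injective _ h

theorem Ring.multichoose_one_sub_self {R : Type*} [CommRing R] [BinomialRing R] (n : ℕ) :
    Ring.multichoose (1 - n : R) n = if n = 0 then 1 else 0 := by
  rw [Ring.multichoose_eq, sub_add_cancel, sub_self, Ring.choose_zero_ite]

theorem add_pow_div_factorial {K : Type*} [Field K] [CharZero K] (x y : K) (n : ℕ) :
    (x + y) ^ n / n ! = ∑ p ∈ antidiagonal n, x ^ p.1 / p.1 ! * (y ^ p.2 / p.2 !) := by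
  have := congrArg (PowerSeries.coeff n) (PowerSeries.exp_mul_exp_eq_exp_add x y)
  simpa [PowerSeries.coeff_mul, div_eq_mul_inv, mul_comm, mul_left_comm] using this.symm

theorem Finset.Nat.sum_antidiagonal_mul_sum_antidiagonal {R : Type*} [CommSemiring R]
    (A B : ℕ → ℕ → R) (s : ℕ) :
    ∑ p ∈ antidiagonal s,
        (∑ a ∈ antidiagonal p.1, A a.1 a.2) * ∑ b ∈ antidiagonal p.2, B b.1 b.2 =
      ∑ p ∈ antidiagonal s, ∑ a ∈ antidiagonal p.1, ∑ b ∈ antidiagonal p.2,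
        A a.1 b.1 * B a.2 b.2 := by
  simp only [sum_mul_sum, sum_sigma']
  apply sum_nbij' (fun ⟨⟨_, _⟩, ⟨k, r⟩, ⟨l, t⟩⟩ ↦ ⟨(k + l, r + t), (k, l), (r, t)⟩)
    (fun ⟨⟨_, _⟩, ⟨k, l⟩, ⟨r, t⟩⟩ ↦ ⟨(k + r, l + t), (k, r), (l, t)⟩)
  all_goals aesop (add simp [add_assoc, add_left_comm])

theorem sum_Icc_eq_sum_antidiagonal {M : Type*} [AddCommMonoid M] (f : ℕ → ℕ → M)
    {n m : ℕ} (h : n ≤ m) :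
    ∑ j ∈ Icc n m, f (m - j) (j - n) = ∑ p ∈ antidiagonal (m - n), f p.1 p.2 := by
  apply sum_nbij' (fun j ↦ (m - j, j - n)) (fun p ↦ n + p.2) <;>
    simp only [mem_Icc, HasAntidiagonal.mem_antidiagonal, Prod.forall, Prod.mk.injEq,
      implies_true] <;>
    omega

theorem Matrix.mul_apply_of_lowerTriangular {K : Type*} [Field K] {N : ℕ} {μ : Fin N → K}
    (hμ : ∀ k, μ k ≠ 0) {A B : Matrix (Fin N) (Fin N) K} {F G : ℕ → ℕ → K}
    (hA : ∀ i j, A i j = if (j : ℕ) ≤ i then μ i / μ j * F i j else 0)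
    (hB : ∀ i j, B i j = if (j : ℕ) ≤ i then μ i / μ j * G i j else 0) (m n : Fin N) :
    (A * B) m n = μ m / μ n * ∑ j ∈ Icc (n : ℕ) m, F m j * G j n := by
  have hterm : ∀ j : Fin N, A m j * B j n =
      μ m / μ n * if (j : ℕ) ∈ Icc (n : ℕ) m then F m j * G j n else 0 := by
    intro j
    rw [hA, hB, ite_zero_mul_ite_zero]
    by_cases h : (j : ℕ) ≤ m ∧ (n : ℕ) ≤ j
    · rw [if_pos h, if_pos (mem_Icc.mpr h.symm)]
      field_simp [hμ j, hμ n]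
    · rw [if_neg h, if_neg fun h' ↦ h (mem_Icc.mp h').symm, mul_zero]
  rw [mul_apply, sum_congr rfl fun j _ ↦ hterm j, ← mul_sum,
    Fin.sum_univ_eq_sum_range (fun j ↦ if j ∈ Icc (n : ℕ) m then F m j * G j n else 0),
    sum_ite_mem, inter_eq_right.mpr fun j hj ↦ by simp at hj ⊢; omega]

theorem poch_eq_ascPochhammer_eval (a : ℝ) (m : ℕ) : poch a m = (ascPochhammer ℝ m).eval a := by
  induction m with
  | zero => simp [poch]
  | succ m ih => rw [poch, prod_range_succ, ← poch, ih, ascPochhammer_succ_right]; simp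

theorem poch_div_factorial (a : ℝ) (m : ℕ) : poch a m / m ! = Ring.multichoose a m := by
  rw [poch_eq_ascPochhammer_eval, ← Polynomial.ascPochhammer_smeval_eq_eval,
    ← Ring.factorial_nsmul_multichoose_eq_ascPochhammer, nsmul_eq_mul]
  field_simp

theorem lagP_eq_sum_antidiagonal (α : ℝ) (n : ℕ) (x : ℝ) :
    lagP α n x =
      ∑ p ∈ antidiagonal n, (-x) ^ p.1 / p.1 ! * Ring.multichoose (α + p.1 + 1) p.2 := by
  rw [lagP, Nat.sum_antidiagonal_eq_sum_range_succ
    (fun k r ↦ (-x) ^ k / k ! * Ring.multichoose (α + k + 1) r)]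
  refine sum_congr rfl fun k _ ↦ ?_
  rw [← poch_div_factorial, neg_pow x]
  field_simp

theorem lagP_add (β γ x y : ℝ) (s : ℕ) :
    ∑ p ∈ antidiagonal s, lagP β p.1 x * lagP γ p.2 y = lagP (β + γ + 1) s (x + y) := by
  simp only [lagP_eq_sum_antidiagonal]
  rw [Finset.Nat.sum_antidiagonal_mul_sum_antidiagonal
    (fun k r ↦ (-x) ^ k / k ! * Ring.multichoose (β + k + 1) r)
    (fun l t ↦ (-y) ^ l / l ! * Ring.multichoose (γ + l + 1) t)]
  refine sum_congr rfl fun p _ ↦ ?_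
  calc _ = ∑ a ∈ antidiagonal p.1, (-x) ^ a.1 / a.1 ! * ((-y) ^ a.2 / a.2 !) *
        Ring.multichoose (β + γ + 1 + p.1 + 1) p.2 := by
        refine sum_congr rfl fun a ha ↦ ?_
        rw [← mem_antidiagonal.mp ha, Nat.cast_add,
          show β + γ + 1 + (a.1 + a.2 : ℝ) + 1 = (β + a.1 + 1) + (γ + a.2 + 1) by ring,
          Ring.multichoose_add, mul_sum]
        exact sum_congr rfl fun b _ ↦ by ring
    _ = _ := by rw [← sum_mul, ← add_pow_div_factorial, neg_add]

theorem lagP_at_zero (α : ℝ) (n : ℕ) : lagP α n 0 = Ring.multichoose (α + 1) n := by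
  rw [lagP, sum_eq_single 0 (fun k _ hk ↦ by simp [hk]) (by simp), ← poch_div_factorial]
  simp

theorem sum_antidiagonal_lagP_neg_mul_lagP (β γ x : ℝ) (s : ℕ) :
    ∑ p ∈ antidiagonal s, lagP β p.1 (-x) * lagP γ p.2 x = Ring.multichoose (β + γ + 2) s := by
  rw [lagP_add, neg_add_cancel, lagP_at_zero, add_assoc, one_add_one_eq_two]

theorem LagMat_inverse_general (N : ℕ) (μ : Fin N → ℝ) (hμ : ∀ k, μ k ≠ 0) (α x : ℝ)
    (M : Matrix (Fin N) (Fin N) ℝ)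
    (hM : M = Matrix.of fun m n : Fin N =>
      if (n : ℕ) ≤ (m : ℕ) then
        μ m / μ n * lagP (-α - ((m : ℕ) + 1) - 1) ((m : ℕ) - (n : ℕ)) (-x)
      else 0) :
    M * LagMat N μ α x = 1 ∧ LagMat N μ α x * M = 1 := by
  have hML : M * LagMat N μ α x = 1 := by
    ext m n
    rw [mul_apply_of_lowerTriangular hμ (A := M) (B := LagMat N μ α x)
      (F := fun i j ↦ lagP (-α - (i + 1) - 1) (i - j) (-x))
      (G := fun i j ↦ lagP (α + j + 1) (i - j) x)
      (fun _ _ ↦ by rw [hM, of_apply]) (fun _ _ ↦ rfl), one_apply]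
    rcases le_or_gt (n : ℕ) m with hnm | hmn
    · rw [sum_Icc_eq_sum_antidiagonal (fun a b ↦ lagP (-α - (m + 1) - 1) a (-x) *
          lagP (α + n + 1) b x) hnm, sum_antidiagonal_lagP_neg_mul_lagP,
        show -α - ((m : ℕ) + 1) - 1 + (α + n + 1) + 2 = 1 - ((m - n : ℕ) : ℝ) by
          push_cast [hnm]; ring,
        Ring.multichoose_one_sub_self]
      rcases eq_or_ne m n with rfl | hne
      · simp [hμ]
      · have := Fin.val_ne_of_ne hne
        rw [if_neg (by omega), if_neg hne, mul_zero]
    · rw [Icc_eq_empty (by omega), sum_empty, mul_zero, if_neg (by omega)]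
  exact ⟨hML, mul_eq_one_comm.mp hML⟩

/-- explicit two-sided inverse of the matrix `L_μ^{(α)}(x)`. -/
theorem LagMat_inverse (N : ℕ) (hN : 1 ≤ N) (μ : Fin N → ℝ) (hμ : ∀ k, μ k ≠ 0) (α x : ℝ)
    (M : Matrix (Fin N) (Fin N) ℝ)
    (hM : M = Matrix.of fun m n : Fin N =>
      if (n : ℕ) ≤ (m : ℕ) then
        μ m / μ n * lagP (-α - ((m : ℕ) + 1) - 1) ((m : ℕ) - (n : ℕ)) (-x)
      else 0) :
    M * LagMat N μ α x = 1 ∧ LagMat N μ α x * M = 1 :=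
  LagMat_inverse_general N μ hμ α x M hM
end
end

section
/- For every real α and every real x the following three matrix identities hold: (i) L_μ^{(α)}(x) · J = ( x(A_μ+I)^{−1} − xI + (αI+J)A_μ + J ) · L_μ^{(α)}(x); (ii) J · L_μ^{(α)}(x) = L_μ^{(α)}(x) · ( J − (αI + J − xI)A_μ − x A_μ² ); (iii) (I + A_μ) · L_μ^{(α)}(x) · (I − A_μ) = L_μ^{(α)}(x). -/
open scoped BigOperators
open Matrix MeasureTheory

noncomputable section

/-!
Every matrix in sight has the form `S_μ K S_μ⁻¹` where `K i j` depends only on the column `j`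
and the offset `i - j`. Once `L_n^{(β)}` is extended by zero to `n < 0`, multiplying such a
matrix by `A_μ` on either side just shifts the column or the offset, with no boundary cases, and
multiplying by a diagonal matrix scales the entries. With `β = α + j + 1` and `n = i - j` each
identity then becomes a three-term relation of Laguerre polynomials:
`L_n^{(β+1)} - L_n^{(β)} = L_{n-1}^{(β+1)}` gives `(A_μ + I) L_μ^{(α+1)} = L_μ^{(α)}` and
`L_μ^{(α)} (I - A_μ) = L_μ^{(α+1)}`, hence (iii) and
`(A_μ + I)⁻¹ L_μ^{(α)} = L_μ^{(α)} (I - A_μ)`; with this, (i) is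
`x L_{n-1}^{(β+1)} = (β + n) L_{n-1}^{(β)} - n L_n^{(β)}`, and (ii) is
`n L_n^{(β)} = (β + 1 - x) L_{n-1}^{(β+1)} - x L_{n-2}^{(β+2)}`.
-/

lemma poch_zero (a : ℝ) : poch a 0 = 1 := by simp [poch]

lemma poch_succ (a : ℝ) (m : ℕ) : poch a (m + 1) = poch a m * (a + m) :=
  Finset.prod_range_succ _ m

lemma poch_succ' (a : ℝ) (m : ℕ) : poch a (m + 1) = a * poch (a + 1) m := by
  simp only [poch, Finset.prod_range_succ', Nat.cast_add, Nat.cast_one, Nat.cast_zero, add_zero]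
  rw [mul_comm]
  congr 1
  exact Finset.prod_congr rfl fun i _ => by ring

lemma lagP_zero (β x : ℝ) : lagP β 0 x = 1 := by
  simp [lagP, poch_zero]

def lagTerm (β : ℝ) (n k : ℕ) (x : ℝ) : ℝ :=
  (-1 : ℝ) ^ k * poch (β + k + 1) (n - k) * x ^ k / ((n - k).factorial * k.factorial)

lemma lagP_eq_sum_lagTerm (β : ℝ) (n : ℕ) (x : ℝ) :
    lagP β n x = ∑ k ∈ Finset.range (n + 1), lagTerm β n k x := rfl

lemma lagTerm_self (β : ℝ) (n : ℕ) (x : ℝ) :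
    lagTerm β n n x = (-1 : ℝ) ^ n * x ^ n / n.factorial := by
  simp [lagTerm, poch_zero]

lemma lagTerm_add_one_sub_lagTerm (β x : ℝ) (k m : ℕ) :
    lagTerm (β + 1) (k + m + 1) k x - lagTerm β (k + m + 1) k x =
      lagTerm (β + 1) (k + m) k x := by
  have hpoch : poch (β + k + 1 + 1) (m + 1) - poch (β + k + 1) (m + 1) =
      (m + 1) * poch (β + k + 1 + 1) m := by
    rw [poch_succ, poch_succ']; ring
  simp only [lagTerm, show k + m + 1 - k = m + 1 by omega, show k + m - k = m by omega,
    Nat.factorial_succ, Nat.cast_mul, Nat.cast_succ, show β + 1 + k + 1 = β + k + 1 + 1 by ring]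
  field_simp
  linear_combination x ^ k * hpoch

lemma lagP_add_one_sub_lagP (β x : ℝ) (n : ℕ) :
    lagP (β + 1) (n + 1) x - lagP β (n + 1) x = lagP (β + 1) n x := by
  simp only [lagP_eq_sum_lagTerm, Finset.sum_range_succ _ (n + 1), lagTerm_self,
    add_sub_add_right_eq_sub, ← Finset.sum_sub_distrib]
  refine Finset.sum_congr rfl fun k hk => ?_
  obtain ⟨m, rfl⟩ := Nat.exists_eq_add_of_le (Finset.mem_range_succ_iff.mp hk)
  exact lagTerm_add_one_sub_lagTerm β x k m

lemma mul_lagTerm_add_one (β x : ℝ) (k m : ℕ) :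
    x * lagTerm (β + 1) (k + m + 1) k x =
      (β + (k + m + 1 : ℕ) + 1) * lagTerm β (k + m + 1) (k + 1) x -
        ((k + m + 1 : ℕ) + 1) * lagTerm β (k + m + 1 + 1) (k + 1) x := by
  simp only [lagTerm, show k + m + 1 - k = m + 1 by omega, show k + m + 1 - (k + 1) = m by omega,
    show k + m + 1 + 1 - (k + 1) = m + 1 by omega, Nat.factorial_succ, Nat.cast_mul, Nat.cast_succ,
    Nat.cast_add, show β + 1 + k + 1 = β + (k + 1) + 1 by ring, poch_succ, pow_succ]
  field_simp
  ring

lemma mul_lagTerm_zero (β x : ℝ) (n : ℕ) :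
    (β + n + 1) * lagTerm β n 0 x = (n + 1) * lagTerm β (n + 1) 0 x := by
  simp only [lagTerm, Nat.sub_zero, Nat.factorial_succ, Nat.cast_mul, Nat.cast_succ, poch_succ,
    Nat.cast_zero, add_zero]
  field_simp
  ring

lemma mul_lagP_add_one (β x : ℝ) (n : ℕ) :
    x * lagP (β + 1) n x = (β + n + 1) * lagP β n x - (n + 1) * lagP β (n + 1) x := by
  have hL₁ : lagP (β + 1) n x =
      ∑ k ∈ Finset.range n, lagTerm (β + 1) n k x + lagTerm (β + 1) n n x :=
    Finset.sum_range_succ _ _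
  have hL : lagP β n x = ∑ k ∈ Finset.range n, lagTerm β n (k + 1) x + lagTerm β n 0 x :=
    Finset.sum_range_succ' _ _
  have hL' : lagP β (n + 1) x = ∑ k ∈ Finset.range n, lagTerm β (n + 1) (k + 1) x +
      lagTerm β (n + 1) (n + 1) x + lagTerm β (n + 1) 0 x := by
    rw [lagP_eq_sum_lagTerm, Finset.sum_range_succ', Finset.sum_range_succ]
  have hmiddle : ∑ k ∈ Finset.range n, x * lagTerm (β + 1) n k x =
      ∑ k ∈ Finset.range n,
        ((β + n + 1) * lagTerm β n (k + 1) x - (n + 1) * lagTerm β (n + 1) (k + 1) x) := by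
    refine Finset.sum_congr rfl fun k hk => ?_
    obtain ⟨m, rfl⟩ := Nat.exists_eq_add_of_lt (Finset.mem_range.mp hk)
    exact mul_lagTerm_add_one β x k m
  have htop : x * lagTerm (β + 1) n n x = -((n + 1) * lagTerm β (n + 1) (n + 1) x) := by
    simp only [lagTerm_self, Nat.factorial_succ, Nat.cast_mul, Nat.cast_succ, pow_succ]
    field_simp
  rw [← Finset.mul_sum, Finset.sum_sub_distrib, ← Finset.mul_sum, ← Finset.mul_sum] at hmiddle
  linear_combination x * hL₁ - (β + n + 1) * hL + (n + 1) * hL' + hmiddle + htop -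
    mul_lagTerm_zero β x n

def lagPInt (β : ℝ) : ℤ → ℝ → ℝ
  | (n : ℕ), x => lagP β n x
  | Int.negSucc _, _ => 0

lemma lagPInt_natCast (β : ℝ) (n : ℕ) (x : ℝ) : lagPInt β n x = lagP β n x := rfl

lemma lagPInt_of_neg (β x : ℝ) {n : ℤ} (hn : n < 0) : lagPInt β n x = 0 := by
  obtain ⟨m, rfl⟩ := Int.exists_eq_neg_ofNat hn.le
  rcases m with _ | m
  · simp at hn
  · rfl

lemma lagPInt_add_one_sub_lagPInt (β x : ℝ) (n : ℤ) :
    lagPInt (β + 1) n x - lagPInt β n x = lagPInt (β + 1) (n - 1) x := by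
  rcases lt_trichotomy n 0 with hn | rfl | hn
  · rw [lagPInt_of_neg _ _ hn, lagPInt_of_neg _ _ hn, lagPInt_of_neg _ _ (by omega), sub_zero]
  · rw [lagPInt_of_neg _ _ (show (0 : ℤ) - 1 < 0 by norm_num)]
    exact sub_eq_zero.2 ((lagP_zero _ _).trans (lagP_zero _ _).symm)
  · obtain ⟨m, rfl⟩ : ∃ m : ℕ, n = m + 1 := ⟨(n - 1).toNat, by omega⟩
    rw [add_sub_cancel_right]
    exact_mod_cast lagP_add_one_sub_lagP β x m

lemma mul_lagPInt_add_one (β x : ℝ) (n : ℤ) :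
    x * lagPInt (β + 1) (n - 1) x = (β + n) * lagPInt β (n - 1) x - n * lagPInt β n x := by
  rcases lt_trichotomy n 0 with hn | rfl | hn
  · simp [lagPInt_of_neg _ _ hn, lagPInt_of_neg _ _ (show n - 1 < 0 by omega)]
  · simp [lagPInt_of_neg]
  · obtain ⟨m, rfl⟩ : ∃ m : ℕ, n = m + 1 := ⟨(n - 1).toNat, by omega⟩
    rw [add_sub_cancel_right]
    push_cast
    rw [← add_assoc]
    exact_mod_cast mul_lagP_add_one β x m

lemma intCast_mul_lagPInt (β x : ℝ) (n : ℤ) :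
    n * lagPInt β n x =
      (β + 1 - x) * lagPInt (β + 1) (n - 1) x - x * lagPInt (β + 2) (n - 2) x := by
  have h₁ := mul_lagPInt_add_one (β + 1) x (n - 1)
  have h₃ := lagPInt_add_one_sub_lagPInt β x (n - 1)
  rw [show β + 1 + 1 = β + 2 by ring, show n - 1 - 1 = n - 2 by ring] at h₁
  rw [show n - 1 - 1 = n - 2 by ring] at h₃
  push_cast at h₁
  linear_combination mul_lagPInt_add_one β x n + h₁ - (β + n) * h₃

section KernelMatrices

variable {N : ℕ} (μ : Fin N → ℝ)

/-- The matrix `S_μ K S_μ⁻¹` with `K i j = f j (i - j)`. -/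
def kernelMat (f : ℕ → ℤ → ℝ) : Matrix (Fin N) (Fin N) ℝ :=
  Matrix.of fun i j => μ i / μ j * f j ((i : ℕ) - (j : ℕ))

@[simp]
lemma kernelMat_apply (f : ℕ → ℤ → ℝ) (i j : Fin N) :
    kernelMat μ f i j = μ i / μ j * f j ((i : ℕ) - (j : ℕ)) := rfl

lemma kernelMat_add (f g : ℕ → ℤ → ℝ) :
    kernelMat μ f + kernelMat μ g = kernelMat μ (fun j n => f j n + g j n) := by
  ext i j; simp [mul_add]

lemma kernelMat_sub (f g : ℕ → ℤ → ℝ) :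
    kernelMat μ f - kernelMat μ g = kernelMat μ (fun j n => f j n - g j n) := by
  ext i j; simp [mul_sub]

lemma smul_kernelMat (c : ℝ) (f : ℕ → ℤ → ℝ) :
    c • kernelMat μ f = kernelMat μ (fun j n => c * f j n) := by
  ext i j; simp; ring

lemma lagMat_eq_kernelMat (α x : ℝ) :
    LagMat N μ α x = kernelMat μ (fun j n => lagPInt (α + j + 1) n x) := by
  ext i j
  simp only [LagMat, Matrix.of_apply, kernelMat_apply]
  split_ifs with hji
  · rw [← Nat.cast_sub hji, lagPInt_natCast]
  · rw [lagPInt_of_neg _ _ (by omega), mul_zero]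

lemma diagonal_mul_kernelMat (a : ℝ) (f : ℕ → ℤ → ℝ) :
    Matrix.diagonal (fun i : Fin N => ((i : ℕ) : ℝ) + a) * kernelMat μ f =
      kernelMat μ (fun j n => (j + n + a) * f j n) := by
  ext i j
  simp only [Matrix.diagonal_mul, kernelMat_apply]
  push_cast
  ring

lemma kernelMat_mul_diagonal (a : ℝ) (f : ℕ → ℤ → ℝ) :
    kernelMat μ f * Matrix.diagonal (fun i : Fin N => ((i : ℕ) : ℝ) + a) =
      kernelMat μ (fun j n => f j n * (j + a)) := by
  ext i j
  simp only [Matrix.mul_diagonal, kernelMat_apply]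
  ring

lemma det_amuMat_add_one : (AmuMat N μ + 1).det = 1 := by
  rw [Matrix.det_of_isLowerTriangular]
  · simp [AmuMat]
  · intro i j hij
    have hij : (i : ℕ) < j := hij
    simp [AmuMat, show (i : ℕ) ≠ j + 1 by omega, show i ≠ j by omega]

lemma smul_one_add_jmat (a : ℝ) :
    a • (1 : Matrix (Fin N) (Fin N) ℝ) + Jmat N =
      Matrix.diagonal fun i : Fin N => ((i : ℕ) : ℝ) + (a + 1) := by
  rw [Matrix.smul_one_eq_diagonal, Jmat, Matrix.diagonal_add]
  congr 1
  funext i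
  ring

variable {μ} (hμ : ∀ k, μ k ≠ 0)
include hμ

lemma kernelMat_mul_amuMat {f : ℕ → ℤ → ℝ} (hf : ∀ j n, n < 0 → f j n = 0) :
    kernelMat μ f * AmuMat N μ = kernelMat μ (fun j n => -f (j + 1) (n - 1)) := by
  ext i j
  rw [Matrix.mul_apply, kernelMat_apply]
  by_cases hj : (j : ℕ) + 1 < N
  · rw [Finset.sum_eq_single ⟨(j : ℕ) + 1, hj⟩]
    · simp only [kernelMat_apply, AmuMat, Matrix.of_apply, if_true]
      rw [show ((i : ℕ) : ℤ) - ((j : ℕ) + 1 : ℕ) = (i : ℕ) - (j : ℕ) - 1 by omega]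
      field_simp [hμ]
    · intro k _ hk
      have : (k : ℕ) ≠ (j : ℕ) + 1 := fun h => hk (Fin.ext h)
      simp [AmuMat, this]
    · simp
  · rw [hf _ _ (by omega), Finset.sum_eq_zero]
    · ring
    intro k _
    have : (k : ℕ) ≠ (j : ℕ) + 1 := by omega
    simp [AmuMat, this]

lemma amuMat_mul_kernelMat {f : ℕ → ℤ → ℝ} (hf : ∀ j n, n < 0 → f j n = 0) :
    AmuMat N μ * kernelMat μ f = kernelMat μ (fun j n => -f j (n - 1)) := by
  ext i j
  rw [Matrix.mul_apply, kernelMat_apply]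
  by_cases hi : (i : ℕ) = 0
  · rw [hf _ _ (by omega), Finset.sum_eq_zero]
    · ring
    intro k _
    have : (i : ℕ) ≠ (k : ℕ) + 1 := by omega
    simp [AmuMat, this]
  · have hk : (i : ℕ) - 1 < N := by omega
    rw [Finset.sum_eq_single ⟨(i : ℕ) - 1, hk⟩]
    · simp only [kernelMat_apply, AmuMat, Matrix.of_apply,
        if_pos (show (i : ℕ) = (i : ℕ) - 1 + 1 by omega)]
      rw [show ((((i : ℕ) - 1 : ℕ)) : ℤ) - (j : ℕ) = (i : ℕ) - (j : ℕ) - 1 by omega]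
      field_simp [hμ]
    · intro k _ hk
      have : (i : ℕ) ≠ (k : ℕ) + 1 := fun h => hk (Fin.ext (by simp; omega))
      simp [AmuMat, this]
    · simp

lemma amuMat_add_one_mul_lagMat (α x : ℝ) :
    (AmuMat N μ + 1) * LagMat N μ (α + 1) x = LagMat N μ α x := by
  rw [add_mul, one_mul, lagMat_eq_kernelMat, lagMat_eq_kernelMat,
    amuMat_mul_kernelMat hμ fun _ _ hn => lagPInt_of_neg _ _ hn, kernelMat_add]
  congr 1
  funext j n
  rw [show α + 1 + j + 1 = α + j + 1 + 1 by ring]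
  linear_combination lagPInt_add_one_sub_lagPInt (α + j + 1) x n

lemma lagMat_mul_one_sub_amuMat (α x : ℝ) :
    LagMat N μ α x * (1 - AmuMat N μ) = LagMat N μ (α + 1) x := by
  rw [mul_sub, mul_one, lagMat_eq_kernelMat, lagMat_eq_kernelMat,
    kernelMat_mul_amuMat hμ fun _ _ hn => lagPInt_of_neg _ _ hn, kernelMat_sub]
  congr 1
  funext j n
  rw [show α + ((j + 1 : ℕ) : ℝ) + 1 = α + j + 1 + 1 by push_cast; ring,
    show α + 1 + j + 1 = α + j + 1 + 1 by ring]
  linear_combination -lagPInt_add_one_sub_lagPInt (α + j + 1) x n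

lemma inv_amuMat_add_one_mul_lagMat (α x : ℝ) :
    (AmuMat N μ + 1)⁻¹ * LagMat N μ α x = LagMat N μ α x * (1 - AmuMat N μ) := by
  rw [lagMat_mul_one_sub_amuMat hμ, ← amuMat_add_one_mul_lagMat hμ α x, ← Matrix.mul_assoc,
    Matrix.nonsing_inv_mul _ (by rw [det_amuMat_add_one]; exact isUnit_one), Matrix.one_mul]

lemma lagMat_mul_jmat (α x : ℝ) :
    LagMat N μ α x * Jmat N = Jmat N * LagMat N μ α x +
      (α • (1 : Matrix (Fin N) (Fin N) ℝ) + Jmat N) * AmuMat N μ * LagMat N μ α x -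
        x • (LagMat N μ α x * AmuMat N μ) := by
  rw [smul_one_add_jmat, Matrix.mul_assoc, lagMat_eq_kernelMat,
    amuMat_mul_kernelMat hμ fun _ _ hn => lagPInt_of_neg _ _ hn,
    kernelMat_mul_amuMat hμ fun _ _ hn => lagPInt_of_neg _ _ hn, Jmat, kernelMat_mul_diagonal,
    diagonal_mul_kernelMat, diagonal_mul_kernelMat, smul_kernelMat, kernelMat_add, kernelMat_sub]
  congr 1
  funext j n
  rw [show α + ((j + 1 : ℕ) : ℝ) + 1 = α + j + 1 + 1 by push_cast; ring]
  linear_combination -mul_lagPInt_add_one (α + j + 1) x n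

lemma jmat_mul_lagMat (α x : ℝ) :
    Jmat N * LagMat N μ α x =
      LagMat N μ α x * (Jmat N - (α • (1 : Matrix (Fin N) (Fin N) ℝ) + Jmat N -
        x • (1 : Matrix (Fin N) (Fin N) ℝ)) * AmuMat N μ - x • AmuMat N μ ^ 2) := by
  have hD : α • (1 : Matrix (Fin N) (Fin N) ℝ) + Jmat N - x • 1 =
      Matrix.diagonal fun i : Fin N => ((i : ℕ) : ℝ) + (α + 1 - x) := by
    rw [smul_one_add_jmat, Matrix.smul_one_eq_diagonal, Matrix.diagonal_sub]
    congr 1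
    funext i
    ring
  rw [hD, mul_sub, mul_sub, Matrix.mul_smul, sq, ← Matrix.mul_assoc, ← Matrix.mul_assoc,
    lagMat_eq_kernelMat, Jmat, kernelMat_mul_diagonal, kernelMat_mul_diagonal,
    diagonal_mul_kernelMat,
    kernelMat_mul_amuMat hμ fun _ _ hn => by rw [lagPInt_of_neg _ _ hn, zero_mul],
    kernelMat_mul_amuMat hμ fun _ _ hn => lagPInt_of_neg _ _ hn,
    kernelMat_mul_amuMat hμ fun _ _ hn => by rw [lagPInt_of_neg _ _ (by omega), neg_zero],
    smul_kernelMat, kernelMat_sub, kernelMat_sub]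
  congr 1
  funext j n
  rw [show α + ((j + 1 : ℕ) : ℝ) + 1 = α + j + 1 + 1 by push_cast; ring,
    show α + ((j + 1 + 1 : ℕ) : ℝ) + 1 = α + j + 1 + 2 by push_cast; ring,
    show n - 1 - 1 = n - 2 by ring]
  push_cast
  linear_combination intCast_mul_lagPInt (α + j + 1) x n

end KernelMatrices

theorem commutation_relations_general (N : ℕ) (μ : Fin N → ℝ) (hμ : ∀ k, μ k ≠ 0)
    (α x : ℝ) :
    (LagMat N μ α x * Jmat N =
      (x • (AmuMat N μ + 1)⁻¹ - x • (1 : Matrix (Fin N) (Fin N) ℝ) +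
          (α • (1 : Matrix (Fin N) (Fin N) ℝ) + Jmat N) * AmuMat N μ + Jmat N) *
        LagMat N μ α x) ∧
    (Jmat N * LagMat N μ α x =
      LagMat N μ α x *
        (Jmat N - (α • (1 : Matrix (Fin N) (Fin N) ℝ) + Jmat N -
            x • (1 : Matrix (Fin N) (Fin N) ℝ)) * AmuMat N μ - x • AmuMat N μ ^ 2)) ∧
    ((1 + AmuMat N μ) * LagMat N μ α x * (1 - AmuMat N μ) = LagMat N μ α x) := by
  refine ⟨?_, jmat_mul_lagMat hμ α x, ?_⟩
  · rw [add_mul, add_mul, sub_mul, Matrix.smul_mul, Matrix.smul_mul, Matrix.one_mul,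
      inv_amuMat_add_one_mul_lagMat hμ, mul_sub, mul_one, lagMat_mul_jmat hμ, smul_sub]
    abel
  · rw [Matrix.mul_assoc, lagMat_mul_one_sub_amuMat hμ, add_comm 1 (AmuMat N μ),
      amuMat_add_one_mul_lagMat hμ]

/-- commutation relations for `L_μ^{(α)}`, `A_μ` and `J`. -/
theorem commutation_relations (N : ℕ) (hN : 1 ≤ N) (μ : Fin N → ℝ) (hμ : ∀ k, μ k ≠ 0)
    (α x : ℝ) :
    (LagMat N μ α x * Jmat N =
      (x • (AmuMat N μ + 1)⁻¹ - x • (1 : Matrix (Fin N) (Fin N) ℝ) +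
          (α • (1 : Matrix (Fin N) (Fin N) ℝ) + Jmat N) * AmuMat N μ + Jmat N) *
        LagMat N μ α x) ∧
    (Jmat N * LagMat N μ α x =
      LagMat N μ α x *
        (Jmat N - (α • (1 : Matrix (Fin N) (Fin N) ℝ) + Jmat N -
            x • (1 : Matrix (Fin N) (Fin N) ℝ)) * AmuMat N μ - x • AmuMat N μ ^ 2)) ∧
    ((1 + AmuMat N μ) * LagMat N μ α x * (1 - AmuMat N μ) = LagMat N μ α x) :=
  commutation_relations_general N μ hμ α x
end
end
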